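/- Let Σ₋ = {(q,p) ∈ T*(ℝ³∖{0}) : H(q,p) < 0} with H = |p|²/2 − 1/|q|, and define r₀ = |p|²|q| − 1, r̄ = √(−2H)|q|p, s₀ = −√(−2H)⟨q,p⟩, s̄ = −(q/|q| − ⟨q,p⟩p). Then (r₀,r̄) and (s₀,s̄) lie on the unit sphere of ℝ⁴ and are orthogonal: r₀² + |r̄|² = 1, s₀² + |s̄|² = 1, and r₀s₀ + ⟨r̄,s̄⟩ = 0. -/
import Mathlib


open scoped RealInnerProductSpace

noncomputable section

abbrev E3 := EuclideanSpace ℝ (Fin 3)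

/-- Kepler Hamiltonian. -/
def keplerH (q p : E3) : ℝ := ‖p‖ ^ 2 / 2 - ‖q‖⁻¹

/-- For (q,p) in the negative-energy region Σ₋, the vectors
r = (r₀,r̄) and s = (s₀,s̄) of the energy-uniform Moser map lie on the
unit sphere of ℝ⁴ and are orthogonal. -/
theorem lsMap_sphere (q p : E3) (hq : q ≠ 0) (hH : keplerH q p < 0) :
    (‖p‖ ^ 2 * ‖q‖ - 1) ^ 2 + ‖Real.sqrt (-2 * keplerH q p) • ‖q‖ • p‖ ^ 2 = 1 ∧
    (-Real.sqrt (-2 * keplerH q p) * ⟪q, p⟫) ^ 2 +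
      ‖-(‖q‖⁻¹ • q - ⟪q, p⟫ • p)‖ ^ 2 = 1 ∧
    (‖p‖ ^ 2 * ‖q‖ - 1) * (-Real.sqrt (-2 * keplerH q p) * ⟪q, p⟫) +
      ⟪Real.sqrt (-2 * keplerH q p) • ‖q‖ • p, -(‖q‖⁻¹ • q - ⟪q, p⟫ • p)⟫ = 0 := by
  have hqn : ‖q‖ ≠ 0 := norm_ne_zero_iff.mpr hq
  have hqpos : (0:ℝ) < ‖q‖ := norm_pos_iff.mpr hq
  set h : ℝ := -2 * keplerH q p with hh
  have hhpos : 0 ≤ h := by simp only [hh]; nlinarith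
  have hsq : Real.sqrt h ^ 2 = h := Real.sq_sqrt hhpos
  have hval : h = 2 * ‖q‖⁻¹ - ‖p‖ ^ 2 := by simp only [hh, keplerH]; ring
  have hqq : ⟪q, q⟫ = ‖q‖ ^ 2 := real_inner_self_eq_norm_sq q
  have hpp : ⟪p, p⟫ = ‖p‖ ^ 2 := real_inner_self_eq_norm_sq p
  have hinv : ‖q‖⁻¹ * ‖q‖ = 1 := inv_mul_cancel₀ hqn
  refine ⟨?_, ?_, ?_⟩
  · rw [norm_smul, norm_smul, mul_pow, mul_pow]
    rw [Real.norm_eq_abs, Real.norm_eq_abs, sq_abs, sq_abs, hsq, hval]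
    field_simp
    ring
  · rw [norm_neg, mul_pow, neg_pow, hsq, @norm_sub_sq_real]
    rw [norm_smul, norm_smul, real_inner_smul_left, real_inner_smul_right,
      Real.norm_eq_abs, abs_of_nonneg (le_of_lt (inv_pos.mpr hqpos)), Real.norm_eq_abs,
      mul_pow, mul_pow, sq_abs, hval]
    have : ⟪q, p⟫ ^ 2 = ⟪q, p⟫ * ⟪q, p⟫ := sq ⟪q, p⟫
    field_simp
    nlinarith [sq_nonneg ⟪q, p⟫]
  · rw [inner_neg_right, inner_sub_right, real_inner_smul_left, real_inner_smul_left,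
      real_inner_smul_right, real_inner_smul_right, real_inner_smul_left,
      real_inner_smul_left, hpp]
    have h1 : ⟪p, q⟫ = ⟪q, p⟫ := (real_inner_comm p q).symm
    rw [h1]
    field_simp
    ring
end
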